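/- (Theorem 4 vi, Lundberg bound) In the discrete-time risk model, assume the net profit condition p·μ < 1, and suppose there exists z > 1 such that 1 − p + p1·E[z^{Y1_1}] + p0·E[z^{Y3_1 + Y4_1}] + p2·E[z^{Y2_1}] = z. Then the sequence {z^{S̃(n)}, n = 0, 1, 2, …}, where S̃(n) = Σ_{i=1}^{n} (I_{A_i}·Y_i − 1), is a martingale with respect to its natural filtration, and the ruin probability satisfies ψ(u) ≤ z^{−u} for every initial capital u ≥ 0. -/

import Mathlib

open MeasureTheory ProbabilityTheory Finset
open scoped NNReal

/-!
With `ξ i = I_{A_i} Y_i - 1` and `S̃ n = ∑_{i<n} ξ i`, the Lundberg equation says exactly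
`E[z ^ ξ i] = 1`: condition on the arrival indicator and then on the claim type, both independent
of the claim sizes. The increments are independent, so `z ^ S̃ n` is a product of independent
mean-one factors, hence a martingale. Ruin before time `n` forces `S̃ n ≥ u + 1`, so Ville's
inequality for the nonnegative martingale `z ^ S̃ n` (started at `1`) bounds the ruin probability by
`z ^ (-(u + 1)) ≤ z ^ (-u)`.
-/

/-- `(I1, I2, I0)` takes the values `(1,0,0)`, `(0,1,0)`, `(0,0,1)` with probabilities
`p1/p`, `p2/p`, `p0/p` respectively, where `p = p0 + p1 + p2`. -/
def IsIndicatorTriple {Ω : Type*} [MeasureSpace Ω] (p0 p1 p2 : ℝ)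
    (I1 I2 I0 : Ω → ℕ) : Prop :=
  Measurable I1 ∧ Measurable I2 ∧ Measurable I0 ∧
  (ℙ {ω | I1 ω = 1 ∧ I2 ω = 0 ∧ I0 ω = 0}).toReal = p1 / (p0 + p1 + p2) ∧
  (ℙ {ω | I1 ω = 0 ∧ I2 ω = 1 ∧ I0 ω = 0}).toReal = p2 / (p0 + p1 + p2) ∧
  (ℙ {ω | I1 ω = 0 ∧ I2 ω = 0 ∧ I0 ω = 1}).toReal = p0 / (p0 + p1 + p2)

section Blocks

variable {Ω ι β : Type*} {mΩ : MeasurableSpace Ω} [mβ : MeasurableSpace β] {μ : Measure Ω}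

lemma measurable_biSup_comap {G : ι → Ω → β} {S : Set ι} {j : ι} (hj : j ∈ S) :
    Measurable[⨆ i ∈ S, mβ.comap (G i)] (G j) :=
  Measurable.of_comap_le (le_biSup (fun i => mβ.comap (G i)) hj)

lemma ProbabilityTheory.iIndepFun.indep_of_le_biSup {G : ι → Ω → β} (h : iIndepFun G μ)
    (hG : ∀ j, Measurable (G j)) {S T : Set ι} (hST : Disjoint S T) {m₁ m₂ : MeasurableSpace Ω}
    (h₁ : m₁ ≤ ⨆ j ∈ S, mβ.comap (G j)) (h₂ : m₂ ≤ ⨆ j ∈ T, mβ.comap (G j)) :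
    Indep m₁ m₂ μ :=
  indep_of_indep_of_le_right (indep_of_indep_of_le_left
    (indep_iSup_of_disjoint (fun j => (hG j).comap_le) h.iIndep hST) h₁) h₂

lemma ProbabilityTheory.iIndepFun.indepFun_of_measurable_biSup {γ δ : Type*} [MeasurableSpace γ]
    [MeasurableSpace δ] {G : ι → Ω → β} (h : iIndepFun G μ) (hG : ∀ j, Measurable (G j))
    {S T : Set ι} (hST : Disjoint S T) {f : Ω → γ} {g : Ω → δ}
    (hf : Measurable[⨆ j ∈ S, mβ.comap (G j)] f) (hg : Measurable[⨆ j ∈ T, mβ.comap (G j)] g) :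
    IndepFun f g μ :=
  (IndepFun_iff_Indep f g μ).2 (h.indep_of_le_biSup hG hST hf.comap_le hg.comap_le)

end Blocks

section FiniteRange

variable {Ω β : Type*} {mΩ : MeasurableSpace Ω} {μ : Measure Ω} {T : Ω → β} {F : Finset β}

lemma restrict_biUnion_preimage_singleton (hF : ∀ᵐ ω ∂μ, T ω ∈ F) :
    μ.restrict (⋃ b ∈ F, T ⁻¹' {b}) = μ :=
  Measure.restrict_eq_self_of_ae_mem <| by
    rw [Finset.set_biUnion_preimage_singleton]; exact hF

variable [MeasurableSpace β] [MeasurableSingletonClass β]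

lemma ae_mem_of_sum_measureReal_preimage_singleton [IsProbabilityMeasure μ] (hT : Measurable T)
    (hF : ∑ b ∈ F, μ.real (T ⁻¹' {b}) = 1) : ∀ᵐ ω ∂μ, T ω ∈ F := by
  rw [sum_measureReal_preimage_singleton F fun b _ => hT (measurableSet_singleton b)] at hF
  exact (ae_iff_measure_eq (hT F.measurableSet).nullMeasurableSet).2 <| by
    rw [measure_univ, ← ENNReal.toReal_eq_one_iff]; exact hF

variable {g : Ω → ℝ} {h : β → Ω → ℝ}

lemma integrableOn_preimage_singleton_of_eqOn (hT : Measurable T)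
    (hgh : ∀ b ∈ F, Set.EqOn g (h b) (T ⁻¹' {b})) (hh : ∀ b ∈ F, Integrable (h b) μ) :
    ∀ b ∈ F, IntegrableOn g (T ⁻¹' {b}) μ := fun b hb =>
  (hh b hb).integrableOn.congr_fun (hgh b hb).symm (hT (measurableSet_singleton b))

lemma integrable_of_eqOn_preimage_singleton (hT : Measurable T) (hF : ∀ᵐ ω ∂μ, T ω ∈ F)
    (hgh : ∀ b ∈ F, Set.EqOn g (h b) (T ⁻¹' {b})) (hh : ∀ b ∈ F, Integrable (h b) μ) :
    Integrable g μ := by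
  rw [← restrict_biUnion_preimage_singleton hF]
  exact integrableOn_finset_iUnion.2 (integrableOn_preimage_singleton_of_eqOn hT hgh hh)

lemma integral_eq_sum_measureReal_mul_of_indepFun (hT : Measurable T) (hF : ∀ᵐ ω ∂μ, T ω ∈ F)
    (hgh : ∀ b ∈ F, Set.EqOn g (h b) (T ⁻¹' {b})) (hh : ∀ b ∈ F, Integrable (h b) μ)
    (hind : ∀ b ∈ F, IndepFun T (h b) μ) :
    ∫ ω, g ω ∂μ = ∑ b ∈ F, μ.real (T ⁻¹' {b}) * ∫ ω, h b ω ∂μ := by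
  conv_lhs => rw [← restrict_biUnion_preimage_singleton hF]
  rw [integral_biUnion_finset F (fun b _ => hT (measurableSet_singleton b))
    (Set.pairwiseDisjoint_fiber T F) (integrableOn_preimage_singleton_of_eqOn hT hgh hh)]
  refine Finset.sum_congr rfl fun b hb => ?_
  rw [setIntegral_congr_fun (hT (measurableSet_singleton b)) (hgh b hb)]
  exact Indep.setIntegral_eq_mul (f := id) hT.comap_le (hind b hb) (hh b hb).aemeasurable
    ⟨{b}, measurableSet_singleton b, rfl⟩ aestronglyMeasurable_id

end FiniteRange

section ExponentialMartingale

variable {Ω : Type*} {mΩ : MeasurableSpace Ω} {μ : Measure Ω} [IsFiniteMeasure μ]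
  {ξ : ℕ → Ω → ℤ}

lemma natural_partialSum_le_iSup_comap (hS : ∀ n, StronglyMeasurable fun ω => ∑ i ∈ range n, ξ i ω)
    (n : ℕ) :
    Filtration.natural (fun n ω => ∑ i ∈ range n, ξ i ω) hS n ≤
      ⨆ i < n, MeasurableSpace.comap (ξ i) inferInstance := by
  refine iSup₂_le fun k hk => Measurable.comap_le <| Finset.measurable_sum _ fun i hi => ?_
  exact Measurable.of_comap_le <| le_biSup (fun i => MeasurableSpace.comap (ξ i) inferInstance)
    (lt_of_lt_of_le (mem_range.1 hi) hk)

theorem martingale_zpow_partialSum {z : ℝ} (hz : z ≠ 0) (hξ : ∀ n, Measurable (ξ n))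
    (hS : ∀ n, StronglyMeasurable fun ω => ∑ i ∈ range n, ξ i ω)
    (hindep : ∀ n, Indep (MeasurableSpace.comap (ξ n) inferInstance)
      (⨆ i < n, MeasurableSpace.comap (ξ i) inferInstance) μ)
    (hint : ∀ n, Integrable (fun ω => z ^ ξ n ω) μ) (hmean : ∀ n, ∫ ω, z ^ ξ n ω ∂μ = 1) :
    Martingale (fun n ω => z ^ ∑ i ∈ range n, ξ i ω)
      (Filtration.natural (fun n ω => ∑ i ∈ range n, ξ i ω) hS) μ := by
  set ℱ := Filtration.natural (fun n ω => ∑ i ∈ range n, ξ i ω) hS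
  set M : ℕ → Ω → ℝ := fun n ω => z ^ ∑ i ∈ range n, ξ i ω
  set W : ℕ → Ω → ℝ := fun n ω => z ^ ξ n ω
  have hMsucc : ∀ n, M (n + 1) = M n * W n := fun n => funext fun ω => by
    simp only [M, W, Pi.mul_apply, sum_range_succ, zpow_add₀ hz]
  have hadapted : StronglyAdapted ℱ M := fun n =>
    ((measurable_of_countable (z ^ · : ℤ → ℝ)).comp
      (Filtration.stronglyAdapted_natural hS n).measurable).stronglyMeasurable
  have hWindep : ∀ n, Indep (MeasurableSpace.comap (W n) inferInstance) (ℱ n) μ := fun n =>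
    indep_of_indep_of_le_right (indep_of_indep_of_le_left (hindep n)
      ((measurable_of_countable _).comp (comap_measurable (ξ n))).comap_le)
      (natural_partialSum_le_iSup_comap hS n)
  have hMint : ∀ n, Integrable (M n) μ := by
    intro n
    induction n with
    | zero => simp [M]
    | succ n ih =>
      rw [hMsucc]
      exact IndepFun.integrable_mul (indep_of_indep_of_le_left (hWindep n).symm
        (hadapted n).measurable.comap_le) ih (hint n)
  refine martingale_nat hadapted hMint fun n => ?_
  have hcond : μ[W n | ℱ n] =ᵐ[μ] fun _ => 1 := by
    rw [← hmean n]
    exact condExp_indep_eq ((measurable_of_countable _).comp (hξ n)).comap_le (ℱ.le n)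
      (comap_measurable (W n)).stronglyMeasurable (hWindep n)
  have hpull : μ[M n * W n | ℱ n] =ᵐ[μ] M n * μ[W n | ℱ n] :=
    condExp_mul_of_stronglyMeasurable_left (hadapted n) (hMsucc n ▸ hMint (n + 1)) (hint n)
  rw [hMsucc]
  filter_upwards [hpull, hcond] with ω hω h1
  rw [hω, Pi.mul_apply, h1, mul_one]

end ExponentialMartingale

section Ville

variable {Ω : Type*} {mΩ : MeasurableSpace Ω} {μ : Measure Ω} [IsFiniteMeasure μ]
  {f : ℕ → Ω → ℝ} {ℱ : Filtration ℕ mΩ}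

theorem MeasureTheory.Martingale.ville_ineq (hf : Martingale f ℱ μ) (hnonneg : 0 ≤ f) {ε : ℝ}
    (hε : 0 < ε) :
    μ.real {ω | ∃ n, ε ≤ f n ω} ≤ (∫ ω, f 0 ω ∂μ) / ε := by
  lift ε to ℝ≥0 using hε.le
  set A : ℕ → Set Ω := fun n =>
    {ω | ε ≤ (range (n + 1)).sup' nonempty_range_add_one fun k => f k ω}
  have hA : {ω | ∃ n, ε ≤ f n ω} = ⋃ n, A n := by
    ext ω
    simp only [A, Set.mem_ofPred_eq, Set.mem_iUnion, Finset.le_sup'_iff, mem_range]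
    exact ⟨fun ⟨n, hn⟩ => ⟨n, n, n.lt_succ_self, hn⟩, fun ⟨_, k, _, hk⟩ => ⟨k, hk⟩⟩
  have hmono : Monotone A := fun m n hmn ω (hω : (ε : ℝ) ≤ _) => show (ε : ℝ) ≤ _ from
    hω.trans (Finset.sup'_mono _ (range_subset_range.2 (Nat.succ_le_succ hmn)) _)
  have hbound : ∀ n, ε * μ (A n) ≤ ENNReal.ofReal (∫ ω, f 0 ω ∂μ) := fun n => by
    refine (maximal_ineq hf.submartingale hnonneg n).trans (ENNReal.ofReal_le_ofReal ?_)
    have hmean : ∫ ω, f 0 ω ∂μ = ∫ ω, f n ω ∂μ := by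
      simpa only [setIntegral_univ] using hf.setIntegral_eq (Nat.zero_le n) MeasurableSet.univ
    rw [hmean]
    exact setIntegral_le_integral (hf.integrable n) (ae_of_all _ (hnonneg n))
  have hle : ε * μ {ω | ∃ n, ε ≤ f n ω} ≤ ENNReal.ofReal (∫ ω, f 0 ω ∂μ) := by
    rw [hA, hmono.measure_iUnion, ENNReal.mul_iSup]
    exact iSup_le hbound
  have hint0 : 0 ≤ ∫ ω, f 0 ω ∂μ := integral_nonneg (hnonneg 0)
  rw [le_div_iff₀ hε, mul_comm]
  have := ENNReal.toReal_mono ENNReal.ofReal_ne_top hle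
  rwa [ENNReal.toReal_mul, ENNReal.coe_toReal, ENNReal.toReal_ofReal hint0] at this

end Ville

theorem measureReal_exists_lt_partialSum_le {Ω : Type*} {mΩ : MeasurableSpace Ω} {μ : Measure Ω}
    [IsProbabilityMeasure μ] {ℱ : Filtration ℕ mΩ} {ξ : ℕ → Ω → ℤ} {z : ℝ}
    (hz : 1 < z) (hM : Martingale (fun n ω => z ^ ∑ i ∈ range n, ξ i ω) ℱ μ) (u : ℤ) :
    μ.real {ω | ∃ n, u < ∑ i ∈ range n, ξ i ω} ≤ z ^ (-(u + 1)) := by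
  have hz0 : 0 < z := zero_lt_one.trans hz
  have hsub : {ω | ∃ n, u < ∑ i ∈ range n, ξ i ω} ⊆
      {ω | ∃ n, z ^ (u + 1) ≤ z ^ ∑ i ∈ range n, ξ i ω} :=
    fun ω ⟨n, hn⟩ => ⟨n, zpow_le_zpow_right₀ hz.le hn⟩
  refine (measureReal_mono hsub).trans
    ((hM.ville_ineq (fun n ω => zpow_nonneg hz0.le _) (zpow_pos hz0 _)).trans_eq ?_)
  simp only [sum_range_zero, zpow_zero, integral_const, probReal_univ, smul_eq_mul, mul_one,
    one_div, zpow_neg]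

lemma integral_zpow_mul_of_indepFun {Ω : Type*} {mΩ : MeasurableSpace Ω} {μ : Measure Ω}
    [IsProbabilityMeasure μ] {A V : Ω → ℕ} (hA : Measurable A) {q : ℝ}
    (hA1 : μ.real {ω | A ω = 1} = q) (hA0 : μ.real {ω | A ω = 0} = 1 - q)
    (hind : IndepFun A V μ) {z : ℝ} (hz : Integrable (fun ω => z ^ V ω) μ) :
    Integrable (fun ω => z ^ (A ω * V ω)) μ ∧
      ∫ ω, z ^ (A ω * V ω) ∂μ = 1 - q + q * ∫ ω, z ^ V ω ∂μ := by
  set h : ℕ → Ω → ℝ := fun a ω => z ^ (a * V ω)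
  have hF : ∀ᵐ ω ∂μ, A ω ∈ ({0, 1} : Finset ℕ) :=
    ae_mem_of_sum_measureReal_preimage_singleton hA (by
      rw [sum_pair zero_ne_one]; exact (congrArg₂ (· + ·) hA0 hA1).trans (by ring))
  have hgh : ∀ a ∈ ({0, 1} : Finset ℕ), Set.EqOn (fun ω => z ^ (A ω * V ω)) (h a) (A ⁻¹' {a}) :=
    fun a _ ω (hω : A ω = a) => by simp only [h, hω]
  have hh : ∀ a ∈ ({0, 1} : Finset ℕ), Integrable (h a) μ := by
    simp only [mem_insert, mem_singleton, forall_eq_or_imp, forall_eq, h, zero_mul, one_mul,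
      pow_zero]
    exact ⟨integrable_const 1, hz⟩
  have hind' : ∀ a ∈ ({0, 1} : Finset ℕ), IndepFun A (h a) μ := fun a _ =>
    hind.comp measurable_id (measurable_of_countable fun v : ℕ => z ^ (a * v))
  refine ⟨integrable_of_eqOn_preimage_singleton hA hF hgh hh, ?_⟩
  rw [integral_eq_sum_measureReal_mul_of_indepFun hA hF hgh hh hind', sum_pair zero_ne_one]
  simp only [h, zero_mul, one_mul, pow_zero, integral_const, probReal_univ, smul_eq_mul]
  rw [show A ⁻¹' {0} = {ω | A ω = 0} from rfl, show A ⁻¹' {1} = {ω | A ω = 1} from rfl, hA0, hA1]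
  ring

lemma integral_zpow_claim {Ω : Type*} [MeasureSpace Ω] [IsProbabilityMeasure (ℙ : Measure Ω)]
    {p0 p1 p2 : ℝ} (hp : p0 + p1 + p2 ≠ 0) {I1 I2 I0 Y1 Y2 Y3 Y4 : Ω → ℕ}
    (hI : IsIndicatorTriple p0 p1 p2 I1 I2 I0)
    (hind : IndepFun (fun ω => (I1 ω, I2 ω, I0 ω)) (fun ω => (Y1 ω, Y2 ω, Y3 ω, Y4 ω)) ℙ)
    {z : ℝ} (hz1 : Integrable (fun ω => z ^ Y1 ω) ℙ)
    (hz34 : Integrable (fun ω => z ^ (Y3 ω + Y4 ω)) ℙ) (hz2 : Integrable (fun ω => z ^ Y2 ω) ℙ) :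
    Integrable (fun ω => z ^ (I1 ω * Y1 ω + I0 ω * (Y3 ω + Y4 ω) + I2 ω * Y2 ω)) ℙ ∧
      (p0 + p1 + p2) * ∫ ω, z ^ (I1 ω * Y1 ω + I0 ω * (Y3 ω + Y4 ω) + I2 ω * Y2 ω) ∂ℙ =
        p1 * ∫ ω, z ^ Y1 ω ∂ℙ + p0 * ∫ ω, z ^ (Y3 ω + Y4 ω) ∂ℙ + p2 * ∫ ω, z ^ Y2 ω ∂ℙ := by
  obtain ⟨hI1, hI2, hI0, hP1, hP2, hP0⟩ := hI
  set T : Ω → ℕ × ℕ × ℕ := fun ω => (I1 ω, I2 ω, I0 ω)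
  set F : Finset (ℕ × ℕ × ℕ) := {(1, 0, 0), (0, 1, 0), (0, 0, 1)}
  set h : ℕ × ℕ × ℕ → Ω → ℝ :=
    fun b ω => z ^ (b.1 * Y1 ω + b.2.2 * (Y3 ω + Y4 ω) + b.2.1 * Y2 ω)
  have hT : Measurable T := hI1.prodMk (hI2.prodMk hI0)
  have hP : ∀ a b c : ℕ, T ⁻¹' {(a, b, c)} = {ω | I1 ω = a ∧ I2 ω = b ∧ I0 ω = c} := by
    intro a b c; ext ω; simp [T]
  have hsum : ∑ b ∈ F, (ℙ : Measure Ω).real (T ⁻¹' {b}) = 1 := by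
    rw [sum_insert (by decide), sum_insert (by decide), sum_singleton, hP, hP, hP]
    simp only [measureReal_def, hP1, hP2, hP0]
    field_simp
    ring
  have hF := ae_mem_of_sum_measureReal_preimage_singleton hT hsum
  have hgh : ∀ b ∈ F, Set.EqOn
      (fun ω => z ^ (I1 ω * Y1 ω + I0 ω * (Y3 ω + Y4 ω) + I2 ω * Y2 ω)) (h b) (T ⁻¹' {b}) :=
    fun b _ ω (hω : T ω = b) => by simp only [h, ← hω, T]
  have hh : ∀ b ∈ F, Integrable (h b) ℙ := by
    simp only [F, mem_insert, mem_singleton, forall_eq_or_imp, forall_eq, h]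
    simpa using ⟨hz1, hz2, hz34⟩
  have hind' : ∀ b ∈ F, IndepFun T (h b) ℙ := fun b _ =>
    hind.comp measurable_id (measurable_of_countable fun v : ℕ × ℕ × ℕ × ℕ =>
      z ^ (b.1 * v.1 + b.2.2 * (v.2.2.1 + v.2.2.2) + b.2.1 * v.2.1))
  refine ⟨integrable_of_eqOn_preimage_singleton hT hF hgh hh, ?_⟩
  rw [integral_eq_sum_measureReal_mul_of_indepFun hT hF hgh hh hind', sum_insert (by decide),
    sum_insert (by decide), sum_singleton, hP, hP, hP]
  simp only [measureReal_def, hP1, hP2, hP0, h, one_mul, zero_mul, add_zero, zero_add]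
  field_simp
  ring

lemma integral_zpow_step_eq_one {Ω : Type*} [MeasureSpace Ω]
    [IsProbabilityMeasure (ℙ : Measure Ω)] {p0 p1 p2 : ℝ} (hp : p0 + p1 + p2 ≠ 0)
    {I1 I2 I0 IA Y Y1 Y2 Y3 Y4 Y1' Y2' Y3' Y4' : Ω → ℕ}
    (hI : IsIndicatorTriple p0 p1 p2 I1 I2 I0) (hIA : Measurable IA)
    (hIA1 : (ℙ : Measure Ω).real {ω | IA ω = 1} = p0 + p1 + p2)
    (hIA0 : (ℙ : Measure Ω).real {ω | IA ω = 0} = 1 - (p0 + p1 + p2))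
    (hY : ∀ ω, Y ω = I1 ω * Y1 ω + I0 ω * (Y3 ω + Y4 ω) + I2 ω * Y2 ω)
    (hind : IndepFun (fun ω => (I1 ω, I2 ω, I0 ω)) (fun ω => (Y1 ω, Y2 ω, Y3 ω, Y4 ω)) ℙ)
    (hindA : IndepFun IA Y ℙ) (hid1 : IdentDistrib Y1 Y1' ℙ ℙ) (hid2 : IdentDistrib Y2 Y2' ℙ ℙ)
    (hid34 : IdentDistrib (fun ω => (Y3 ω, Y4 ω)) (fun ω => (Y3' ω, Y4' ω)) ℙ ℙ)
    {z : ℝ} (hz : z ≠ 0) (hz1 : Integrable (fun ω => z ^ Y1' ω) ℙ)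
    (hz34 : Integrable (fun ω => z ^ (Y3' ω + Y4' ω)) ℙ) (hz2 : Integrable (fun ω => z ^ Y2' ω) ℙ)
    (heq : 1 - (p0 + p1 + p2) + p1 * (∫ ω, z ^ Y1' ω ∂ℙ)
        + p0 * (∫ ω, z ^ (Y3' ω + Y4' ω) ∂ℙ) + p2 * (∫ ω, z ^ Y2' ω ∂ℙ) = z) :
    Integrable (fun ω => z ^ ((IA ω * Y ω : ℤ) - 1)) ℙ ∧
      ∫ ω, z ^ ((IA ω * Y ω : ℤ) - 1) ∂ℙ = 1 := by
  have hd1 := hid1.comp (measurable_of_countable fun k : ℕ => z ^ k)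
  have hd2 := hid2.comp (measurable_of_countable fun k : ℕ => z ^ k)
  have hd34 := hid34.comp (measurable_of_countable fun v : ℕ × ℕ => z ^ (v.1 + v.2))
  obtain ⟨hYint, hYmean⟩ := integral_zpow_claim hp hI hind (hd1.integrable_iff.2 hz1)
    (hd34.integrable_iff.2 hz34) (hd2.integrable_iff.2 hz2)
  simp only [← hY] at hYint hYmean
  obtain ⟨hint, hmean⟩ := integral_zpow_mul_of_indepFun hIA hIA1 hIA0 hindA hYint
  have e1 : ∫ ω, z ^ Y1 ω ∂ℙ = ∫ ω, z ^ Y1' ω ∂ℙ := hd1.integral_eq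
  have e2 : ∫ ω, z ^ Y2 ω ∂ℙ = ∫ ω, z ^ Y2' ω ∂ℙ := hd2.integral_eq
  have e34 : ∫ ω, z ^ (Y3 ω + Y4 ω) ∂ℙ = ∫ ω, z ^ (Y3' ω + Y4' ω) ∂ℙ := hd34.integral_eq
  have hmean_z : ∫ ω, z ^ (IA ω * Y ω) ∂ℙ = z := by
    rw [hmean, hYmean, e1, e2, e34]
    linarith
  have hshift : (fun ω => z ^ ((IA ω * Y ω : ℤ) - 1)) = fun ω => z ^ (IA ω * Y ω) * z⁻¹ :=
    funext fun ω => by rw [zpow_sub_one₀ hz, ← Nat.cast_mul, zpow_natCast]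
  rw [hshift, integral_mul_const, hmean_z, mul_inv_cancel₀ hz]
  exact ⟨hint.mul_const _, rfl⟩

section RiskFamily

variable {Ω : Type*} {Y1 Y2 Y3 Y4 I1 I2 I0 IA : ℕ → Ω → ℕ}

variable (Y1 Y2 Y3 Y4 I1 I2 I0 IA) in
/-- The family in the independence hypothesis `hindep` of `lundberg_martingale_and_ruin_bound`. -/
def riskFamily : ℕ ⊕ ℕ ⊕ ℕ ⊕ ℕ ⊕ ℕ → Ω → ℕ × ℕ × ℕ :=
  Sum.elim (fun i ω => (Y1 i ω, 0, 0)) <| Sum.elim (fun i ω => (Y2 i ω, 0, 0)) <|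
    Sum.elim (fun i ω => (Y3 i ω, Y4 i ω, 0)) <|
      Sum.elim (fun i ω => (I1 i ω, I2 i ω, I0 i ω)) fun i ω => (IA i ω, 0, 0)

def riskTime : ℕ ⊕ ℕ ⊕ ℕ ⊕ ℕ ⊕ ℕ → ℕ :=
  Sum.elim id (Sum.elim id (Sum.elim id (Sum.elim id id)))

def claimIndices (n : ℕ) : Set (ℕ ⊕ ℕ ⊕ ℕ ⊕ ℕ ⊕ ℕ) :=
  {.inl n, .inr (.inl n), .inr (.inr (.inl n)), .inr (.inr (.inr (.inl n)))}

lemma measurable_claim_of_subset {Y : ℕ → Ω → ℕ}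
    (hY : ∀ i ω, Y i ω = I1 i ω * Y1 i ω + I0 i ω * (Y3 i ω + Y4 i ω) + I2 i ω * Y2 i ω)
    {S : Set (ℕ ⊕ ℕ ⊕ ℕ ⊕ ℕ ⊕ ℕ)} {n : ℕ} (hS : claimIndices n ⊆ S) :
    Measurable[⨆ j ∈ S, MeasurableSpace.comap (riskFamily Y1 Y2 Y3 Y4 I1 I2 I0 IA j) inferInstance]
      (Y n) := by
  simp only [claimIndices, Set.insert_subset_iff, Set.singleton_subset_iff] at hS
  obtain ⟨h1, h2, h34, hI⟩ := hS
  have hYn : Y n = (fun v : (ℕ × ℕ × ℕ) × (ℕ × ℕ × ℕ) × (ℕ × ℕ × ℕ) × (ℕ × ℕ × ℕ) =>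
      v.2.2.2.1 * v.1.1 + v.2.2.2.2.2 * (v.2.2.1.1 + v.2.2.1.2.1) + v.2.2.2.2.1 * v.2.1.1) ∘
      fun ω => (riskFamily Y1 Y2 Y3 Y4 I1 I2 I0 IA (.inl n) ω,
        riskFamily Y1 Y2 Y3 Y4 I1 I2 I0 IA (.inr (.inl n)) ω,
        riskFamily Y1 Y2 Y3 Y4 I1 I2 I0 IA (.inr (.inr (.inl n))) ω,
        riskFamily Y1 Y2 Y3 Y4 I1 I2 I0 IA (.inr (.inr (.inr (.inl n)))) ω) :=
    funext (hY n)
  rw [hYn]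
  exact (measurable_of_countable _).comp ((measurable_biSup_comap h1).prodMk
    ((measurable_biSup_comap h2).prodMk
      ((measurable_biSup_comap h34).prodMk (measurable_biSup_comap hI))))

lemma measurable_step_of_subset {Y : ℕ → Ω → ℕ}
    (hY : ∀ i ω, Y i ω = I1 i ω * Y1 i ω + I0 i ω * (Y3 i ω + Y4 i ω) + I2 i ω * Y2 i ω)
    {S : Set (ℕ ⊕ ℕ ⊕ ℕ ⊕ ℕ ⊕ ℕ)} {n : ℕ} (hS : claimIndices n ⊆ S)
    (hA : .inr (.inr (.inr (.inr n))) ∈ S) :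
    Measurable[⨆ j ∈ S, MeasurableSpace.comap (riskFamily Y1 Y2 Y3 Y4 I1 I2 I0 IA j) inferInstance]
      (fun ω => (IA n ω * Y n ω : ℤ) - 1) :=
  (measurable_of_countable fun v : ℕ × ℕ => (v.1 * v.2 : ℤ) - 1).comp
    ((measurable_fst.comp (measurable_biSup_comap hA)).prodMk (measurable_claim_of_subset hY hS))

variable [MeasurableSpace Ω] {μ : Measure Ω}

lemma indepFun_indicators_claims (hG : iIndepFun (riskFamily Y1 Y2 Y3 Y4 I1 I2 I0 IA) μ)
    (hGm : ∀ j, Measurable (riskFamily Y1 Y2 Y3 Y4 I1 I2 I0 IA j)) (n : ℕ) :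
    IndepFun (fun ω => (I1 n ω, I2 n ω, I0 n ω)) (fun ω => (Y1 n ω, Y2 n ω, Y3 n ω, Y4 n ω)) μ :=
  hG.indepFun_of_measurable_biSup hGm (S := {.inr (.inr (.inr (.inl n)))})
    (T := {.inl n, .inr (.inl n), .inr (.inr (.inl n))}) (by simp)
    (measurable_biSup_comap (Set.mem_singleton _))
    ((measurable_of_countable fun v : (ℕ × ℕ × ℕ) × (ℕ × ℕ × ℕ) × (ℕ × ℕ × ℕ) =>
      (v.1.1, v.2.1.1, v.2.2.1, v.2.2.2.1)).comp
        ((measurable_biSup_comap (j := Sum.inl n) (by simp)).prodMk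
          ((measurable_biSup_comap (j := Sum.inr (Sum.inl n)) (by simp)).prodMk
            (measurable_biSup_comap (j := Sum.inr (Sum.inr (Sum.inl n))) (by simp)))))

lemma indepFun_arrival_claim {Y : ℕ → Ω → ℕ}
    (hY : ∀ i ω, Y i ω = I1 i ω * Y1 i ω + I0 i ω * (Y3 i ω + Y4 i ω) + I2 i ω * Y2 i ω)
    (hG : iIndepFun (riskFamily Y1 Y2 Y3 Y4 I1 I2 I0 IA) μ)
    (hGm : ∀ j, Measurable (riskFamily Y1 Y2 Y3 Y4 I1 I2 I0 IA j)) (n : ℕ) :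
    IndepFun (IA n) (Y n) μ := by
  have hA : Measurable[⨆ j ∈ ({Sum.inr (Sum.inr (Sum.inr (Sum.inr n)))} : Set _),
      MeasurableSpace.comap (riskFamily Y1 Y2 Y3 Y4 I1 I2 I0 IA j) inferInstance] (IA n) :=
    measurable_fst.comp (measurable_biSup_comap (Set.mem_singleton _))
  exact hG.indepFun_of_measurable_biSup hGm (by simp [claimIndices]) hA
    (measurable_claim_of_subset hY subset_rfl)

lemma indep_step_iSup_lt {Y : ℕ → Ω → ℕ}
    (hY : ∀ i ω, Y i ω = I1 i ω * Y1 i ω + I0 i ω * (Y3 i ω + Y4 i ω) + I2 i ω * Y2 i ω)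
    (hG : iIndepFun (riskFamily Y1 Y2 Y3 Y4 I1 I2 I0 IA) μ)
    (hGm : ∀ j, Measurable (riskFamily Y1 Y2 Y3 Y4 I1 I2 I0 IA j)) (n : ℕ) :
    Indep (MeasurableSpace.comap (fun ω => (IA n ω * Y n ω : ℤ) - 1) inferInstance)
      (⨆ i < n, MeasurableSpace.comap (fun ω => (IA i ω * Y i ω : ℤ) - 1) inferInstance) μ := by
  refine hG.indep_of_le_biSup hGm (S := {j | riskTime j = n}) (T := {j | riskTime j < n})
    (Set.disjoint_left.2 fun j (hj : _ = n) (hj' : _ < n) => hj'.ne hj)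
    (measurable_step_of_subset hY ?_ (by simp [riskTime])).comap_le
    (iSup₂_le fun i hi => (measurable_step_of_subset hY ?_ (by simp [riskTime, hi])).comap_le)
  · simp [claimIndices, Set.insert_subset_iff, riskTime]
  · simp [claimIndices, Set.insert_subset_iff, riskTime, hi]

end RiskFamily

theorem lundberg_martingale_and_ruin_bound
    {Ω : Type*} [MeasureSpace Ω] [IsProbabilityMeasure (ℙ : Measure Ω)]
    (p0 p1 p2 : ℝ) (hp0 : 0 < p0) (hp1 : 0 < p1) (hp2 : 0 < p2)
    (Y1 Y2 Y3 Y4 : ℕ → Ω → ℕ)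
    (hmeas : ∀ i, Measurable (Y1 i) ∧ Measurable (Y2 i) ∧ Measurable (Y3 i) ∧ Measurable (Y4 i))
    (hid1 : ∀ i, IdentDistrib (Y1 i) (Y1 0) ℙ ℙ)
    (hid2 : ∀ i, IdentDistrib (Y2 i) (Y2 0) ℙ ℙ)
    (hid34 : ∀ i, IdentDistrib (fun ω => (Y3 i ω, Y4 i ω)) (fun ω => (Y3 0 ω, Y4 0 ω)) ℙ ℙ)
    (I1 I2 I0 : ℕ → Ω → ℕ)
    (hI : ∀ i, IsIndicatorTriple p0 p1 p2 (I1 i) (I2 i) (I0 i))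
    (IA : ℕ → Ω → ℕ) (hIAmeas : ∀ i, Measurable (IA i))
    (hIA1 : ∀ i, (ℙ {ω | IA i ω = 1}).toReal = p0 + p1 + p2)
    (hIA0 : ∀ i, (ℙ {ω | IA i ω = 0}).toReal = 1 - (p0 + p1 + p2))
    (hindep : iIndepFun
      (fun i : ℕ ⊕ ℕ ⊕ ℕ ⊕ ℕ ⊕ ℕ => (match i with
        | .inl i => fun ω => (Y1 i ω, 0, 0)
        | .inr (.inl i) => fun ω => (Y2 i ω, 0, 0)
        | .inr (.inr (.inl i)) => fun ω => (Y3 i ω, Y4 i ω, 0)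
        | .inr (.inr (.inr (.inl i))) => fun ω => (I1 i ω, I2 i ω, I0 i ω)
        | .inr (.inr (.inr (.inr i))) => fun ω => (IA i ω, 0, 0) : Ω → ℕ × ℕ × ℕ)) ℙ)
    (Y : ℕ → Ω → ℕ)
    (hY : ∀ i ω, Y i ω = I1 i ω * Y1 i ω + I0 i ω * (Y3 i ω + Y4 i ω) + I2 i ω * Y2 i ω)
    (z : ℝ) (hz : 1 < z)
    (hz1 : Integrable (fun ω => z ^ Y1 0 ω) ℙ)
    (hz34 : Integrable (fun ω => z ^ (Y3 0 ω + Y4 0 ω)) ℙ)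
    (hz2 : Integrable (fun ω => z ^ Y2 0 ω) ℙ)
    (heq : 1 - (p0 + p1 + p2) + p1 * (∫ ω, z ^ Y1 0 ω ∂ℙ)
        + p0 * (∫ ω, z ^ (Y3 0 ω + Y4 0 ω) ∂ℙ) + p2 * (∫ ω, z ^ Y2 0 ω ∂ℙ) = z)
    (hSmeas : ∀ n : ℕ, StronglyMeasurable
      (fun ω => ∑ i ∈ Finset.range n, ((IA i ω * Y i ω : ℤ) - 1))) :
    Martingale
      (fun n ω => z ^ (∑ i ∈ Finset.range n, ((IA i ω * Y i ω : ℤ) - 1)))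
      (Filtration.natural (fun n ω => ∑ i ∈ Finset.range n, ((IA i ω * Y i ω : ℤ) - 1))
        hSmeas) ℙ ∧
    ∀ u : ℕ,
      (ℙ {ω | ∃ n : ℕ, 0 < n ∧
          ((u : ℤ) + n - ∑ i ∈ Finset.range n, (IA i ω * Y i ω : ℤ)) < 0}).toReal ≤
        z ^ (-(u : ℤ)) := by
  have hz0 : 0 < z := zero_lt_one.trans hz
  have hGm : ∀ j, Measurable (riskFamily Y1 Y2 Y3 Y4 I1 I2 I0 IA j) := by
    rintro (i | i | i | i | i)
    exacts [(hmeas i).1.prodMk measurable_const, (hmeas i).2.1.prodMk measurable_const,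
      (hmeas i).2.2.1.prodMk ((hmeas i).2.2.2.prodMk measurable_const),
      (hI i).1.prodMk ((hI i).2.1.prodMk (hI i).2.2.1), (hIAmeas i).prodMk measurable_const]
  have hG : iIndepFun (riskFamily Y1 Y2 Y3 Y4 I1 I2 I0 IA) ℙ := by
    convert hindep using 1
    funext i
    rcases i with i | i | i | i | i <;> rfl
  have hstep n := integral_zpow_step_eq_one (by positivity) (hI n) (hIAmeas n) (hIA1 n) (hIA0 n)
    (hY n) (indepFun_indicators_claims hG hGm n) (indepFun_arrival_claim hY hG hGm n)
    (hid1 n) (hid2 n) (hid34 n) hz0.ne' hz1 hz34 hz2 heq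
  have hM := martingale_zpow_partialSum hz0.ne'
    (fun n => (measurable_step_of_subset hY (Set.subset_univ _) (Set.mem_univ _)).mono
      (iSup₂_le fun j _ => (hGm j).comap_le) le_rfl)
    hSmeas (indep_step_iSup_lt hY hG hGm) (fun n => (hstep n).1) (fun n => (hstep n).2)
  refine ⟨hM, fun u => ?_⟩
  have hruin : {ω | ∃ n : ℕ, 0 < n ∧ ((u : ℤ) + n - ∑ i ∈ range n, (IA i ω * Y i ω : ℤ)) < 0} ⊆
      {ω | ∃ n, (u : ℤ) < ∑ i ∈ range n, ((IA i ω * Y i ω : ℤ) - 1)} := by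
    rintro ω ⟨n, -, hn⟩
    refine ⟨n, ?_⟩
    rw [sum_sub_distrib, sum_const, card_range, nsmul_one]
    omega
  exact (measureReal_mono hruin).trans ((measureReal_exists_lt_partialSum_le hz hM u).trans
    (zpow_le_zpow_right₀ hz.le (by omega)))
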